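/- arXiv:math/0507364 — 8 statements merged into one kernel-verified Lean document; each statement's English description precedes it below -/
import Mathlib

section
/- In the BMW algebra, the relation e_i(t_i - a) = 0 holds; consequently, on the decomposition of a module into blocks Π_0 ⊕ Π_1 ⊕ Π_2 with t_i Π_2 = Π_1, e_i Π_0 = τ Π_0, and e_i(Π_1 ⊕ Π_2) determined by a map v, the generators take block forms e_i = [[τ, av, v],[0,0,0],[0,0,0]] and t_i = [[a, -aεv, 0],[0, ε, 1],[0, 1, 0]], and these matrices satisfy t_i - t_i^{-1} = ε(1 - e_i), e_i t_i = a e_i, and e_i^2 = τ e_i. -/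
open Module

/-- Block-matrix form of the BMW generators. On a module `V₀ × W × W`
(the blocks `Π₀ ⊕ Π₁ ⊕ Π₂`, where `t` identifies the blocks `Π₁` and `Π₂`),
given an arbitrary linear map `v : W →ₗ[F] V₀`, the operators
`e = [[τ, a v, v], [0,0,0], [0,0,0]]` and `t = [[a, -a ε v, 0], [0, ε, 1], [0, 1, 0]]`
satisfy: `t` is invertible, `t - t⁻¹ = ε (1 - e)`, `e t = a e`, and `e² = τ e`,
provided `τ = 1 - (a - a⁻¹)/ε`. -/
theorem bmw_block_matrix_form {F : Type*} [Field F]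
    {V₀ W : Type*} [AddCommGroup V₀] [Module F V₀] [AddCommGroup W] [Module F W]
    (a ε τ : F) (ha : a ≠ 0) (hε : ε ≠ 0) (hτ : τ = 1 - (a - a⁻¹) / ε)
    (v : W →ₗ[F] V₀)
    (e t : End F (V₀ × W × W))
    (he : ∀ x : V₀ × W × W, e x = (τ • x.1 + a • v x.2.1 + v x.2.2, 0, 0))
    (ht : ∀ x : V₀ × W × W,
      t x = (a • x.1 - (a * ε) • v x.2.1, ε • x.2.1 + x.2.2, x.2.1)) :
    ∃ tinv : End F (V₀ × W × W),
      t * tinv = 1 ∧ tinv * t = 1 ∧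
      t - tinv = ε • (1 - e) ∧
      e * t = a • e ∧
      e * e = τ • e := by
  refine ⟨{ toFun := fun y => (a⁻¹ • y.1 + ε • v y.2.2, y.2.2, y.2.1 - ε • y.2.2),
            map_add' := by
              intro x y
              refine Prod.ext ?_ (Prod.ext ?_ ?_) <;> simp [smul_add] <;> abel
            map_smul' := by
              intro c x
              refine Prod.ext ?_ (Prod.ext ?_ ?_) <;>
                simp [smul_add, smul_sub, smul_comm c] }, ?_, ?_, ?_, ?_, ?_⟩
  · refine LinearMap.ext fun x => ?_
    simp only [Module.End.mul_apply, LinearMap.coe_mk, AddHom.coe_mk, ht,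
      Module.End.one_apply, map_add, map_smul, map_sub]
    refine Prod.ext ?_ (Prod.ext ?_ ?_) <;> dsimp <;> match_scalars <;> (try rw [hτ]) <;>
      field_simp <;> ring
  · refine LinearMap.ext fun x => ?_
    simp only [Module.End.mul_apply, LinearMap.coe_mk, AddHom.coe_mk, ht,
      Module.End.one_apply, map_add, map_smul, map_sub]
    refine Prod.ext ?_ (Prod.ext ?_ ?_) <;> dsimp <;> match_scalars <;> (try rw [hτ]) <;>
      field_simp <;> ring
  · refine LinearMap.ext fun x => ?_
    simp only [LinearMap.sub_apply, LinearMap.coe_mk, AddHom.coe_mk, ht, he,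
      LinearMap.smul_apply, Module.End.one_apply, LinearMap.sub_apply,
      Module.End.one_apply]
    refine Prod.ext ?_ (Prod.ext ?_ ?_) <;> simp <;> match_scalars <;> (try rw [hτ]) <;>
      field_simp <;> ring
  · refine LinearMap.ext fun x => ?_
    simp only [Module.End.mul_apply, ht, he, LinearMap.smul_apply, map_add,
      map_smul, map_sub]
    refine Prod.ext ?_ (Prod.ext ?_ ?_) <;> simp <;> match_scalars <;> (try rw [hτ]) <;>
      field_simp <;> ring
  · refine LinearMap.ext fun x => ?_
    simp only [Module.End.mul_apply, he, LinearMap.smul_apply, map_add, map_smul]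
    refine Prod.ext ?_ (Prod.ext ?_ ?_) <;> simp <;> match_scalars <;> (try rw [hτ]) <;>
      field_simp <;> ring
end

section
/- The 3×3 matrices e_1 = e_3 = [[τ, a, 1],[0,0,0],[0,0,0]], e_2 = e_4 = [[0,0,0],[0,0,0],[1, a^{-1}, τ]], t_1 = t_3 = [[a, -aε, 0],[0, ε, 1],[0,1,0]], t_2 = t_4 = [[ε, 1, 0],[1,0,0],[-ε, 0, a]] satisfy all defining relations of the BMW algebra B_4 with parameters a = p^{-1}q^{-2}, ε = p - p^{-1}, τ = (pq - p^{-1}q^{-1})(q+q^{-1})/(p - p^{-1}). -/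
/-!
Every relation is an identity between explicit 3×3 matrices, so it reduces to finitely many
polynomial identities in the entries. Writing `b` for `a⁻¹`, these identities hold in any
commutative ring as soon as `a * b = 1` and `b = a - ε + ε * τ`; the latter is the usual
compatibility condition `a⁻¹ - a = ε (τ - 1)` between the BMW parameters. For
`a = p⁻¹q⁻²`, `ε = p - p⁻¹` and the given `τ` it holds because both sides equal `p q²`.
-/

theorem inv_eq_sub_add_mul_of_bmw_params {F : Type*} [Field F] {p q : F}
    (hp : p ≠ 0) (hq : q ≠ 0) (hp2 : p ^ 2 ≠ 1) :
    (p⁻¹ * q⁻¹ ^ 2)⁻¹ = p⁻¹ * q⁻¹ ^ 2 - (p - p⁻¹) +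
      (p - p⁻¹) * ((p * q - p⁻¹ * q⁻¹) * (q + q⁻¹) / (p - p⁻¹)) := by
  have hε : p - p⁻¹ ≠ 0 := by
    rw [sub_ne_zero]
    contrapose! hp2
    rw [sq]
    nth_rewrite 2 [hp2]
    exact mul_inv_cancel₀ hp
  rw [mul_div_cancel₀ _ hε]
  field_simp
  ring

namespace BMWMatrices

variable {R : Type*} [CommRing R] (a b ε τ : R)

def e₁ : Matrix (Fin 3) (Fin 3) R := !![τ, a, 1; 0, 0, 0; 0, 0, 0]

def e₂ : Matrix (Fin 3) (Fin 3) R := !![0, 0, 0; 0, 0, 0; 1, b, τ]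

def t₁ : Matrix (Fin 3) (Fin 3) R := !![a, -(a * ε), 0; 0, ε, 1; 0, 1, 0]

def t₂ : Matrix (Fin 3) (Fin 3) R := !![ε, 1, 0; 1, 0, 0; -ε, 0, a]

def s₁ : Matrix (Fin 3) (Fin 3) R := !![b, 0, ε; 0, 0, 1; 0, 1, -ε]

def s₂ : Matrix (Fin 3) (Fin 3) R := !![0, 1, 0; 1, -ε, 0; 0, ε * b, b]

variable {a b ε τ}

theorem t₁_mul_t₂_mul_t₁ : t₁ a ε * t₂ a ε * t₁ a ε = t₂ a ε * t₁ a ε * t₂ a ε := by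
  ext i j
  fin_cases i <;> fin_cases j <;> simp [t₁, t₂, Matrix.mul_apply, Fin.sum_univ_three] <;> ring

theorem e₁_mul_e₂_mul_e₁ : e₁ a τ * e₂ b τ * e₁ a τ = e₁ a τ := by
  ext i j
  fin_cases i <;> fin_cases j <;> simp [e₁, e₂, Matrix.mul_apply, Fin.sum_univ_three]

theorem e₂_mul_e₁_mul_e₂ : e₂ b τ * e₁ a τ * e₂ b τ = e₂ b τ := by
  ext i j
  fin_cases i <;> fin_cases j <;> simp [e₁, e₂, Matrix.mul_apply, Fin.sum_univ_three]

theorem t₁_mul_s₁ (hab : a * b = 1) : t₁ a ε * s₁ b ε = 1 := by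
  ext i j
  fin_cases i <;> fin_cases j <;> simp [t₁, s₁, Matrix.mul_apply, Fin.sum_univ_three]
  all_goals grind

theorem t₂_mul_s₂ (hab : a * b = 1) : t₂ a ε * s₂ b ε = 1 := by
  ext i j
  fin_cases i <;> fin_cases j <;> simp [t₂, s₂, Matrix.mul_apply, Fin.sum_univ_three]
  all_goals grind

theorem t₁_sub_s₁ (hb : b = a - ε + ε * τ) : t₁ a ε - s₁ b ε = ε • (1 - e₁ a τ) := by
  ext i j
  fin_cases i <;> fin_cases j <;> simp [t₁, s₁, e₁]
  all_goals grind

theorem t₂_sub_s₂ (hb : b = a - ε + ε * τ) : t₂ a ε - s₂ b ε = ε • (1 - e₂ b τ) := by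
  ext i j
  fin_cases i <;> fin_cases j <;> simp [t₂, s₂, e₂]
  all_goals grind

theorem inv_t₁ (hab : a * b = 1) : (t₁ a ε)⁻¹ = s₁ b ε :=
  Matrix.inv_eq_right_inv (t₁_mul_s₁ hab)

theorem inv_t₂ (hab : a * b = 1) : (t₂ a ε)⁻¹ = s₂ b ε :=
  Matrix.inv_eq_right_inv (t₂_mul_s₂ hab)

theorem t₁_mul_inv_t₁ (hab : a * b = 1) : t₁ a ε * (t₁ a ε)⁻¹ = 1 := by
  rw [inv_t₁ hab, t₁_mul_s₁ hab]

theorem t₂_mul_inv_t₂ (hab : a * b = 1) : t₂ a ε * (t₂ a ε)⁻¹ = 1 := by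
  rw [inv_t₂ hab, t₂_mul_s₂ hab]

theorem t₁_sub_inv_t₁ (hab : a * b = 1) (hb : b = a - ε + ε * τ) :
    t₁ a ε - (t₁ a ε)⁻¹ = ε • (1 - e₁ a τ) := by
  rw [inv_t₁ hab, t₁_sub_s₁ hb]

theorem t₂_sub_inv_t₂ (hab : a * b = 1) (hb : b = a - ε + ε * τ) :
    t₂ a ε - (t₂ a ε)⁻¹ = ε • (1 - e₂ b τ) := by
  rw [inv_t₂ hab, t₂_sub_s₂ hb]

theorem e₁_mul_t₁ (hab : a * b = 1) (hb : b = a - ε + ε * τ) :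
    e₁ a τ * t₁ a ε = a • e₁ a τ := by
  ext i j
  fin_cases i <;> fin_cases j <;> simp [e₁, t₁, Matrix.mul_apply, Fin.sum_univ_three]
  all_goals grind

theorem t₁_mul_e₁ : t₁ a ε * e₁ a τ = a • e₁ a τ := by
  ext i j
  fin_cases i <;> fin_cases j <;> simp [e₁, t₁, Matrix.mul_apply, Fin.sum_univ_three]

theorem e₂_mul_t₂ (hab : a * b = 1) (hb : b = a - ε + ε * τ) :
    e₂ b τ * t₂ a ε = a • e₂ b τ := by
  ext i j
  fin_cases i <;> fin_cases j <;> simp [e₂, t₂, Matrix.mul_apply, Fin.sum_univ_three]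
  all_goals grind

theorem t₂_mul_e₂ : t₂ a ε * e₂ b τ = a • e₂ b τ := by
  ext i j
  fin_cases i <;> fin_cases j <;> simp [e₂, t₂, Matrix.mul_apply, Fin.sum_univ_three]

theorem e₁_mul_e₁ : e₁ a τ * e₁ a τ = τ • e₁ a τ := by
  ext i j
  fin_cases i <;> fin_cases j <;> simp [e₁, Matrix.mul_apply, Fin.sum_univ_three]

theorem e₂_mul_e₂ : e₂ b τ * e₂ b τ = τ • e₂ b τ := by
  ext i j
  fin_cases i <;> fin_cases j <;> simp [e₂, Matrix.mul_apply, Fin.sum_univ_three]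

theorem e₁_mul_t₂_mul_e₁ (hb : b = a - ε + ε * τ) : e₁ a τ * t₂ a ε * e₁ a τ = b • e₁ a τ := by
  ext i j
  fin_cases i <;> fin_cases j <;> simp [e₁, t₂, Matrix.mul_apply, Fin.sum_univ_three]
  all_goals grind

theorem e₂_mul_t₁_mul_e₂ : e₂ b τ * t₁ a ε * e₂ b τ = b • e₂ b τ := by
  ext i j
  fin_cases i <;> fin_cases j <;> simp [e₂, t₁, Matrix.mul_apply, Fin.sum_univ_three]

theorem t₂_mul_t₁_mul_e₂ (hab : a * b = 1) (hb : b = a - ε + ε * τ) :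
    t₂ a ε * t₁ a ε * e₂ b τ = e₁ a τ * t₂ a ε * t₁ a ε := by
  ext i j
  fin_cases i <;> fin_cases j <;> simp [e₁, e₂, t₁, t₂, Matrix.mul_apply, Fin.sum_univ_three]
  all_goals grind

theorem e₁_mul_t₂_mul_t₁ (hab : a * b = 1) (hb : b = a - ε + ε * τ) :
    e₁ a τ * t₂ a ε * t₁ a ε = e₁ a τ * e₂ b τ := by
  ext i j
  fin_cases i <;> fin_cases j <;> simp [e₁, e₂, t₁, t₂, Matrix.mul_apply, Fin.sum_univ_three]
  all_goals grind

theorem t₁_mul_t₂_mul_e₁ (hab : a * b = 1) :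
    t₁ a ε * t₂ a ε * e₁ a τ = e₂ b τ * t₁ a ε * t₂ a ε := by
  ext i j
  fin_cases i <;> fin_cases j <;> simp [e₁, e₂, t₁, t₂, Matrix.mul_apply, Fin.sum_univ_three]
  all_goals grind

theorem e₂_mul_t₁_mul_t₂ (hab : a * b = 1) :
    e₂ b τ * t₁ a ε * t₂ a ε = e₂ b τ * e₁ a τ := by
  ext i j
  fin_cases i <;> fin_cases j <;> simp [e₁, e₂, t₁, t₂, Matrix.mul_apply, Fin.sum_univ_three]
  all_goals grind

end BMWMatrices

open BMWMatrices

/-- The explicit 3×3 matrices for the representation of the BMW algebra `B₄`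
satisfy all the defining BMW relations with parameters `a = p⁻¹q⁻²`,
`ε = p - p⁻¹`, `τ = (pq - p⁻¹q⁻¹)(q + q⁻¹)/(p - p⁻¹)`. -/
theorem bmw_B4_matrix_representation {F : Type*} [Field F] (p q : F)
    (hp : p ≠ 0) (hq : q ≠ 0) (hp2 : p ^ 2 ≠ 1) :
    let a : F := p⁻¹ * q⁻¹ ^ 2
    let ε : F := p - p⁻¹
    let τ : F := (p * q - p⁻¹ * q⁻¹) * (q + q⁻¹) / (p - p⁻¹)
    let e₁ : Matrix (Fin 3) (Fin 3) F := !![τ, a, 1; 0, 0, 0; 0, 0, 0]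
    let e₂ : Matrix (Fin 3) (Fin 3) F := !![0, 0, 0; 0, 0, 0; 1, a⁻¹, τ]
    let t₁ : Matrix (Fin 3) (Fin 3) F := !![a, -(a * ε), 0; 0, ε, 1; 0, 1, 0]
    let t₂ : Matrix (Fin 3) (Fin 3) F := !![ε, 1, 0; 1, 0, 0; -ε, 0, a]
    (t₁ * t₂ * t₁ = t₂ * t₁ * t₂) ∧
    (e₁ * e₂ * e₁ = e₁) ∧ (e₂ * e₁ * e₂ = e₂) ∧
    (t₁ * t₁⁻¹ = 1) ∧ (t₂ * t₂⁻¹ = 1) ∧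
    (t₁ - t₁⁻¹ = ε • (1 - e₁)) ∧ (t₂ - t₂⁻¹ = ε • (1 - e₂)) ∧
    (e₁ * t₁ = a • e₁) ∧ (t₁ * e₁ = a • e₁) ∧
    (e₂ * t₂ = a • e₂) ∧ (t₂ * e₂ = a • e₂) ∧
    (e₁ * e₁ = τ • e₁) ∧ (e₂ * e₂ = τ • e₂) ∧
    (e₁ * t₂ * e₁ = a⁻¹ • e₁) ∧ (e₂ * t₁ * e₂ = a⁻¹ • e₂) ∧
    (t₂ * t₁ * e₂ = e₁ * t₂ * t₁) ∧ (e₁ * t₂ * t₁ = e₁ * e₂) ∧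
    (t₁ * t₂ * e₁ = e₂ * t₁ * t₂) ∧ (e₂ * t₁ * t₂ = e₂ * e₁) := by
  intro a ε τ e₁ e₂ t₁ t₂
  have hab : a * a⁻¹ = 1 := mul_inv_cancel₀ (by simp [a, hp, hq])
  have hb : a⁻¹ = a - ε + ε * τ := inv_eq_sub_add_mul_of_bmw_params hp hq hp2
  exact ⟨t₁_mul_t₂_mul_t₁, e₁_mul_e₂_mul_e₁, e₂_mul_e₁_mul_e₂, t₁_mul_inv_t₁ hab,
    t₂_mul_inv_t₂ hab, t₁_sub_inv_t₁ hab hb, t₂_sub_inv_t₂ hab hb, e₁_mul_t₁ hab hb,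
    t₁_mul_e₁, e₂_mul_t₂ hab hb, t₂_mul_e₂, e₁_mul_e₁, e₂_mul_e₂, e₁_mul_t₂_mul_e₁ hb,
    e₂_mul_t₁_mul_e₂, t₂_mul_t₁_mul_e₂ hab hb, e₁_mul_t₂_mul_t₁ hab hb, t₁_mul_t₂_mul_e₁ hab,
    e₂_mul_t₁_mul_t₂ hab⟩
end

section
/- With σ = a t_3^{-1} t_2^{-1} t_1^{-1} computed in the explicit 3-dimensional representation of B_4, the matrix σ equals [[0, ε, 1],[0, 1, 0],[1, -ε, 0]] and satisfies σ^2 = 1 on the subrepresentation generated appropriately; in particular σ has the stated matrix form. -/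
/-!
The braid word `t₁ t₂ t₁` is `a` times the matrix `σ₀ = [[0, ε, 1], [0, 1, 0], [1, -ε, 0]]`,
a polynomial identity valid for arbitrary `a` and `ε`, and `σ₀` is an involution. Hence, once
`a ≠ 0`, `σ = a (t₁ t₂ t₁)⁻¹ = σ₀⁻¹ = σ₀`.
-/

namespace BMW₄

variable {R : Type*} [CommRing R]

def t₁ (a ε : R) : Matrix (Fin 3) (Fin 3) R := !![a, -(a * ε), 0; 0, ε, 1; 0, 1, 0]

def t₂ (a ε : R) : Matrix (Fin 3) (Fin 3) R := !![ε, 1, 0; 1, 0, 0; -ε, 0, a]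

def rotation (ε : R) : Matrix (Fin 3) (Fin 3) R := !![0, ε, 1; 0, 1, 0; 1, -ε, 0]

theorem rotation_mul_self (ε : R) : rotation ε * rotation ε = 1 := by
  simp [rotation, Matrix.one_fin_three]

theorem t₁_mul_t₂_mul_t₁ (a ε : R) : t₁ a ε * t₂ a ε * t₁ a ε = a • rotation ε := by
  simp [t₁, t₂, rotation, Matrix.smul_of]

end BMW₄

theorem Matrix.inv_smul_of_mul_self_eq_one {n K : Type*} [Fintype n] [DecidableEq n] [Field K]
    {M : Matrix n n K} (hM : M * M = 1) {a : K} (ha : a ≠ 0) : (a • M)⁻¹ = a⁻¹ • M :=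
  Matrix.inv_eq_left_inv (by rw [smul_mul_smul_comm, hM, inv_mul_cancel₀ ha, one_smul])

theorem bmw_B4_sigma_matrix_general {F : Type*} [Field F] (p q : F)
    (hp : p ≠ 0) (hq : q ≠ 0) :
    let a : F := p⁻¹ * q⁻¹ ^ 2
    let ε : F := p - p⁻¹
    let t₁ : Matrix (Fin 3) (Fin 3) F := !![a, -(a * ε), 0; 0, ε, 1; 0, 1, 0]
    let t₂ : Matrix (Fin 3) (Fin 3) F := !![ε, 1, 0; 1, 0, 0; -ε, 0, a]
    let t₃ : Matrix (Fin 3) (Fin 3) F := t₁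
    let σ : Matrix (Fin 3) (Fin 3) F := a • (t₃⁻¹ * t₂⁻¹ * t₁⁻¹)
    σ = !![0, ε, 1; 0, 1, 0; 1, -ε, 0] ∧ σ * σ = 1 := by
  intro a ε t₁ t₂ t₃ σ
  have ha : a ≠ 0 := mul_ne_zero (inv_ne_zero hp) (pow_ne_zero _ (inv_ne_zero hq))
  have hσ : σ = BMW₄.rotation ε :=
    calc σ = a • (t₁ * t₂ * t₁)⁻¹ := by simp only [σ, t₃, Matrix.mul_inv_rev, mul_assoc]
      _ = a • (a • BMW₄.rotation ε)⁻¹ := by rw [← BMW₄.t₁_mul_t₂_mul_t₁]; rfl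
      _ = BMW₄.rotation ε := by
        rw [Matrix.inv_smul_of_mul_self_eq_one (BMW₄.rotation_mul_self ε) ha, smul_smul,
          mul_inv_cancel₀ ha, one_smul]
  exact ⟨hσ, hσ ▸ BMW₄.rotation_mul_self ε⟩

/-- In the explicit 3-dimensional representation of `B₄` (where `t₃ = t₁`),
the cyclic rotation operator `σ = a t₃⁻¹ t₂⁻¹ t₁⁻¹` is given by the matrix
`[[0, ε, 1], [0, 1, 0], [1, -ε, 0]]`, and it satisfies `σ² = 1`. -/
theorem bmw_B4_sigma_matrix {F : Type*} [Field F] (p q : F)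
    (hp : p ≠ 0) (hq : q ≠ 0) (hp2 : p ^ 2 ≠ 1) :
    let a : F := p⁻¹ * q⁻¹ ^ 2
    let ε : F := p - p⁻¹
    let t₁ : Matrix (Fin 3) (Fin 3) F := !![a, -(a * ε), 0; 0, ε, 1; 0, 1, 0]
    let t₂ : Matrix (Fin 3) (Fin 3) F := !![ε, 1, 0; 1, 0, 0; -ε, 0, a]
    let t₃ : Matrix (Fin 3) (Fin 3) F := t₁
    let σ : Matrix (Fin 3) (Fin 3) F := a • (t₃⁻¹ * t₂⁻¹ * t₁⁻¹)
    σ = !![0, ε, 1; 0, 1, 0; 1, -ε, 0] ∧ σ * σ = 1 :=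
  bmw_B4_sigma_matrix_general p q hp hq
end

section
/- The operator Y_{12}(u) = [(b-u)(c - u·t) + c·u·e] / [(b+u)(c+u)], defined via the Brauer algebra with t^2 = 1, e·t = t·e = e, e^2 = τ·e, τ = 2(1 + b/c), satisfies the unitarity relation Y_{12}(u) Y_{21}(-u) = 1. -/
/-!
Write `Y(u) = X(u) / ((b+u)(c+u))`. Since `t² = 1`, the `t`-parts of `X(u) X(-u)` multiply to
`(b² - u²)(c² - u²)`; the cross terms with `e` add up to `2cu²(b + c) e`, and `e² = τ e` contributes
`-c²u²τ e`, which cancels them exactly because `cτ = 2(b + c)`. Hence `X(u) X(-u)` is the product of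
the two denominators.
-/

section BrauerTwoStrands

variable {F R : Type*} [CommRing F] [Ring R] [Algebra F R]

def brauerYNumerator (b c u : F) (t e : R) : R :=
  (b - u) • (c • (1 : R) - u • t) + (c * u) • e

theorem brauerYNumerator_mul_neg (b c u τ : F) {t e : R}
    (ht : t * t = 1) (het : e * t = e) (hte : t * e = e) (hee : e * e = τ • e)
    (hτ : c * τ = 2 * (b + c)) :
    brauerYNumerator b c u t e * brauerYNumerator b c (-u) t e =
      ((b + u) * (c + u) * ((b - u) * (c - u))) • (1 : R) := by
  simp only [brauerYNumerator, mul_add, add_mul, sub_mul, mul_sub,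
    smul_mul_assoc, mul_smul_comm, one_mul, mul_one, ht, het, hte, hee, smul_smul]
  match_scalars
  · ring
  · ring
  · linear_combination (-u ^ 2 * c) * hτ

end BrauerTwoStrands

theorem brauer_Y_unitarity_general {F : Type*} [Field F]
    {R : Type*} [Ring R] [Algebra F R]
    (b c u : F) (hc : c ≠ 0)
    (hden : (b + u) * (c + u) ≠ 0) (hden' : (b - u) * (c - u) ≠ 0)
    (t e : R)
    (ht : t * t = 1) (het : e * t = e) (hte : t * e = e)
    (hee : e * e = (2 * (1 + b / c)) • e)
    (Y : F → R)
    (hY : ∀ x : F, Y x =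
      ((b + x) * (c + x))⁻¹ • ((b - x) • (c • (1 : R) - x • t) + (c * x) • e)) :
    Y u * Y (-u) = 1 := by
  have hτ : c * (2 * (1 + b / c)) = 2 * (b + c) := by
    field_simp
    ring
  have hY' (x : F) : Y x = ((b + x) * (c + x))⁻¹ • brauerYNumerator b c x t e := hY x
  rw [hY', hY', smul_mul_smul_comm, brauerYNumerator_mul_neg b c u _ ht het hte hee hτ,
    smul_smul, ← sub_eq_add_neg, ← sub_eq_add_neg, ← mul_inv,
    inv_mul_cancel₀ (mul_ne_zero hden hden'), one_smul]

/-- Unitarity of the rational (Brauer algebra valued) Yang–Baxter operator: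
with `t² = 1`, `e t = t e = e`, `e² = τ e`, `τ = 2(1 + b/c)`, the operator
`Y(u) = [(b-u)(c·1 - u·t) + c u e] / [(b+u)(c+u)]` satisfies `Y(u) Y(-u) = 1`. -/
theorem brauer_Y_unitarity {F : Type*} [Field F] [CharZero F]
    {R : Type*} [Ring R] [Algebra F R]
    (b c u : F) (hb : b ≠ 0) (hc : c ≠ 0)
    (hden : (b + u) * (c + u) ≠ 0) (hden' : (b - u) * (c - u) ≠ 0)
    (t e : R)
    (ht : t * t = 1) (het : e * t = e) (hte : t * e = e)
    (hee : e * e = (2 * (1 + b / c)) • e)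
    (Y : F → R)
    (hY : ∀ x : F, Y x =
      ((b + x) * (c + x))⁻¹ • ((b - x) • (c • (1 : R) - x • t) + (c * x) • e)) :
    Y u * Y (-u) = 1 :=
  brauer_Y_unitarity_general b c u hc hden hden' t e ht het hte hee Y hY
end

section
/- The Brauer-algebra-valued operator Y_{i,i+1}(u) = [(b-u)(c - u t_i) + c u e_i]/[(b+u)(c+u)] satisfies the rational Yang-Baxter equation Y_{12}(u) Y_{23}(u+v) Y_{12}(v) = Y_{23}(v) Y_{12}(u+v) Y_{23}(u). -/
set_option maxHeartbeats 4000000 in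
/-- The Brauer-algebra-valued operator
`Y_{i,i+1}(u) = [(b-u)(c - u t_i) + c u e_i]/[(b+u)(c+u)]`
satisfies the rational Yang–Baxter equation
`Y₁₂(u) Y₂₃(u+v) Y₁₂(v) = Y₂₃(v) Y₁₂(u+v) Y₂₃(u)`. -/
theorem brauer_yang_baxter {F : Type*} [Field F] [CharZero F]
    {R : Type*} [Ring R] [Algebra F R]
    (b c u v : F) (hb : b ≠ 0) (hc : c ≠ 0)
    (hu : (b + u) * (c + u) ≠ 0) (hv : (b + v) * (c + v) ≠ 0)
    (huv : (b + (u + v)) * (c + (u + v)) ≠ 0)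
    (t₁ t₂ e₁ e₂ : R)
    (ht₁ : t₁ * t₁ = 1) (ht₂ : t₂ * t₂ = 1)
    (hbraid : t₁ * t₂ * t₁ = t₂ * t₁ * t₂)
    (he₁t : e₁ * t₁ = e₁) (ht₁e : t₁ * e₁ = e₁)
    (he₂t : e₂ * t₂ = e₂) (ht₂e : t₂ * e₂ = e₂)
    (he₁ : e₁ * e₁ = (2 * (1 + b / c)) • e₁)
    (he₂ : e₂ * e₂ = (2 * (1 + b / c)) • e₂)
    (he₁e₂e₁ : e₁ * e₂ * e₁ = e₁) (he₂e₁e₂ : e₂ * e₁ * e₂ = e₂)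
    (he₁t₂e₁ : e₁ * t₂ * e₁ = e₁) (he₂t₁e₂ : e₂ * t₁ * e₂ = e₂)
    (h₁ : t₁ * t₂ * e₁ = e₂ * e₁) (h₂ : e₂ * t₁ * t₂ = e₂ * e₁)
    (h₃ : t₂ * t₁ * e₂ = e₁ * e₂) (h₄ : e₁ * t₂ * t₁ = e₁ * e₂)
    (Y₁ Y₂ : F → R)
    (hY₁ : ∀ x : F, Y₁ x =
      ((b + x) * (c + x))⁻¹ • ((b - x) • (c • (1 : R) - x • t₁) + (c * x) • e₁))
    (hY₂ : ∀ x : F, Y₂ x =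
      ((b + x) * (c + x))⁻¹ • ((b - x) • (c • (1 : R) - x • t₂) + (c * x) • e₂)) :
    Y₁ u * Y₂ (u + v) * Y₁ v = Y₂ v * Y₁ (u + v) * Y₂ u := by
  -- Reduction lemmas for length-3 words, right-associated
  have l1 : t₁ * (t₂ * e₁) = e₂ * e₁ := by rw [← mul_assoc, h₁]
  have l2 : t₁ * (e₂ * e₁) = t₂ * e₁ := by
    rw [← h₁]; simp only [← mul_assoc]; rw [ht₁, one_mul]
  have l3 : e₁ * (t₂ * t₁) = e₁ * e₂ := by rw [← mul_assoc, h₄]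
  have l4 : e₁ * (t₂ * e₁) = e₁ := by rw [← mul_assoc, he₁t₂e₁]
  have l5 : e₁ * (e₂ * t₁) = e₁ * t₂ := by
    rw [← mul_assoc, ← h₄, mul_assoc, ht₁, mul_one]
  have l6 : e₁ * (e₂ * e₁) = e₁ := by rw [← mul_assoc, he₁e₂e₁]
  have r1 : t₂ * (t₁ * t₂) = t₁ * (t₂ * t₁) := by
    rw [← mul_assoc, ← hbraid, mul_assoc]
  have r2 : t₂ * (t₁ * e₂) = e₁ * e₂ := by rw [← mul_assoc, h₃]
  have r4 : t₂ * (e₁ * e₂) = t₁ * e₂ := by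
    rw [← h₃]; simp only [← mul_assoc]; rw [ht₂, one_mul]
  have r5 : e₂ * (t₁ * t₂) = e₂ * e₁ := by rw [← mul_assoc, h₂]
  have r6 : e₂ * (t₁ * e₂) = e₂ := by rw [← mul_assoc, he₂t₁e₂]
  have r7 : e₂ * (e₁ * t₂) = e₂ * t₁ := by
    rw [← mul_assoc, ← h₂, mul_assoc, ht₂, mul_one]
  have r8 : e₂ * (e₁ * e₂) = e₂ := by rw [← mul_assoc, he₂e₁e₂]
  have r3 : t₂ * (e₁ * t₂) = t₁ * (e₂ * t₁) := by
    have h5 : e₁ * t₂ = e₁ * e₂ * t₁ := by rw [← h₄, mul_assoc, ht₁, mul_one]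
    rw [h5, ← h₃]
    simp only [← mul_assoc]
    rw [ht₂, one_mul, mul_assoc]
  have key :
      ((b - u) • (c • (1 : R) - u • t₁) + (c * u) • e₁) *
        ((b - (u + v)) • (c • (1 : R) - (u + v) • t₂) + (c * (u + v)) • e₂) *
        ((b - v) • (c • (1 : R) - v • t₁) + (c * v) • e₁) =
      ((b - v) • (c • (1 : R) - v • t₂) + (c * v) • e₂) *
        ((b - (u + v)) • (c • (1 : R) - (u + v) • t₁) + (c * (u + v)) • e₁) *
        ((b - u) • (c • (1 : R) - u • t₂) + (c * u) • e₂) := by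
    simp only [smul_sub, sub_mul, mul_sub, add_mul, mul_add, smul_add,
      smul_mul_assoc, mul_smul_comm, smul_smul, one_mul, mul_one, mul_assoc,
      ht₁, ht₂, ht₁e, he₁t, ht₂e, he₂t, he₁, he₂,
      l1, l2, l3, l4, l5, l6, r1, r2, r3, r4, r5, r6, r7, r8]
    match_scalars <;> field_simp <;> ring
  rw [hY₁ u, hY₁ v, hY₁ (u + v), hY₂ u, hY₂ v, hY₂ (u + v)]
  simp only [smul_mul_assoc, mul_smul_comm, smul_smul]
  rw [key]
  match_scalars
  ring
end

section
/- In the BMW algebra, the element Y_{i,i+1}(z) defined by D(z) Y_{i,i+1}(z) = (z-1) p^{-1} a^{-1} t_i - ε(1 - p^{-1}a^{-1}) + (z^{-1} - 1) t_i^{-1} with D(z) = (z - q^2)(z - p^2) p^{-1} z^{-1} satisfies Y_{i,i+1}(z) e_i = e_i and the unitarity Y(z^{-1}) Y(z) = 1. -/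
set_option maxHeartbeats 1600000


/-- In the BMW algebra with `a = p⁻¹q⁻²`, `ε = p - p⁻¹`,
`τ = (pq - p⁻¹q⁻¹)(q + q⁻¹)/(p - p⁻¹)`, the Baxterized element
`Y(z) = D(z)⁻¹ [(z-1) p⁻¹ a⁻¹ t - ε(1 - p⁻¹a⁻¹) + (z⁻¹-1) t⁻¹]` with
`D(z) = (z - q²)(z - p²) p⁻¹ z⁻¹` satisfies `Y(z) e = e` and the unitarity
relation `Y(z⁻¹) Y(z) = 1`. -/
theorem bmw_Y_normalization_unitarity {F : Type*} [Field F]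
    {R : Type*} [Ring R] [Algebra F R]
    (p q z : F) (hp : p ≠ 0) (hq : q ≠ 0) (hz : z ≠ 0)
    (a ε τ : F)
    (ha : a = p⁻¹ * q⁻¹ ^ 2) (hε : ε = p - p⁻¹)
    (hτ : τ = (p * q - p⁻¹ * q⁻¹) * (q + q⁻¹) / (p - p⁻¹))
    (D : F → F) (hD : ∀ x : F, D x = (x - q ^ 2) * (x - p ^ 2) * p⁻¹ * x⁻¹)
    (hDz : D z ≠ 0) (hDzinv : D z⁻¹ ≠ 0)
    (t tinv e : R)
    (htinv : t * tinv = 1) (htinv' : tinv * t = 1)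
    (hskein : t - tinv = ε • (1 - e))
    (het : e * t = a • e) (hte : t * e = a • e)
    (hee : e * e = τ • e)
    (Y : F → R)
    (hY : ∀ x : F, x ≠ 0 → Y x = (D x)⁻¹ •
      (((x - 1) * p⁻¹ * a⁻¹) • t - (ε * (1 - p⁻¹ * a⁻¹)) • (1 : R)
        + (x⁻¹ - 1) • tinv)) :
    Y z * e = e ∧ Y z⁻¹ * Y z = 1 := by
  have hP : p * p⁻¹ = 1 := mul_inv_cancel₀ hp
  have hQ : q * q⁻¹ = 1 := mul_inv_cancel₀ hq
  have hZ : z * z⁻¹ = 1 := mul_inv_cancel₀ hz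
  have hainv : a⁻¹ = p * q ^ 2 := by
    rw [ha, mul_inv, inv_inv, inv_pow, inv_inv]
  -- eliminate tinv
  have ht_eq : t = tinv + ε • (1 : R) - ε • e := by
    have h := hskein
    rw [smul_sub, sub_eq_iff_eq_add] at h
    rw [h]; abel
  have htinv_eq : tinv = t - ε • (1 : R) + ε • e := by
    rw [ht_eq]; abel
  -- square of t
  have ht2 : t * t = 1 + ε • t - (ε * a) • e := by
    calc t * t = t * (tinv + ε • (1 : R) - ε • e) := by rw [← ht_eq]
      _ = 1 + ε • t - (ε * a) • e := by
          rw [mul_sub, mul_add, htinv, mul_smul_comm, mul_smul_comm, mul_one,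
            hte, smul_smul]
  -- the key annihilation relation
  have hM : (a * a - (1 + ε * a - ε * a * τ)) • e = 0 := by
    have e1 : t * (t * e) = (a * a) • e := by
      rw [hte, mul_smul_comm, hte, smul_smul]
    have e2 : t * (t * e) = (1 + ε * a - ε * a * τ) • e := by
      rw [← mul_assoc, ht2]
      simp only [sub_mul, add_mul, one_mul, smul_mul_assoc, hte, hee,
        smul_smul]
      module
    rw [sub_smul, e1.symm.trans e2, sub_self]
  -- multiplication lemmas
  have key : ∀ α β γ : F, (α • t + β • e + γ • (1 : R)) * e
      = (α * a + β * τ + γ) • e := by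
    intro α β γ
    simp only [add_mul, smul_mul_assoc, hte, hee, one_mul, smul_smul]
    module
  have keymul : ∀ α β γ α' β' γ' : F,
      (α • t + β • e + γ • (1 : R)) * (α' • t + β' • e + γ' • (1 : R))
      = (α * α' * ε + α * γ' + γ * α') • t
        + (α * β' * a + β * α' * a + β * β' * τ + β * γ' + γ * β'
            - α * α' * (ε * a)) • e
        + (α * α' + γ * γ') • (1 : R) := by
    intro α β γ α' β' γ'
    simp only [add_mul, mul_add, smul_mul_assoc, mul_smul_comm, ht2, hte, het,
      hee, mul_one, one_mul, smul_add, smul_sub, smul_smul]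
    module
  -- expansions of Y
  have hYz : Y z = ((D z)⁻¹ * ((z - 1) * p⁻¹ * a⁻¹ + (z⁻¹ - 1))) • t
      + ((D z)⁻¹ * ((z⁻¹ - 1) * ε)) • e
      + ((D z)⁻¹ * (-(ε * (1 - p⁻¹ * a⁻¹)) - (z⁻¹ - 1) * ε)) • (1 : R) := by
    rw [hY z hz, htinv_eq]
    module
  have hYzi : Y z⁻¹ = ((D z⁻¹)⁻¹ * ((z⁻¹ - 1) * p⁻¹ * a⁻¹ + (z - 1))) • t
      + ((D z⁻¹)⁻¹ * ((z - 1) * ε)) • e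
      + ((D z⁻¹)⁻¹ * (-(ε * (1 - p⁻¹ * a⁻¹)) - (z - 1) * ε)) • (1 : R) := by
    rw [hY z⁻¹ (inv_ne_zero hz), htinv_eq, inv_inv]
    module
  constructor
  · -- Y z * e = e
    rw [hYz, key]
    have h1 : ((z - 1) * p⁻¹ * a⁻¹ + (z⁻¹ - 1)) * a + (z⁻¹ - 1) * ε * τ
        + (-(ε * (1 - p⁻¹ * a⁻¹)) - (z⁻¹ - 1) * ε)
        = D z + ((z⁻¹ - 1) * p * q ^ 2) * (a * a - (1 + ε * a - ε * a * τ)) := by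
      rw [hainv, ha, hε, hD]
      linear_combination (-q^2*p⁻¹ - q^2*p⁻¹*q⁻¹^2*τ - q^2*p⁻¹*q⁻¹^2*z⁻¹ + q^2*p⁻¹*q⁻¹^2*z⁻¹*τ + q^2*p⁻¹*q⁻¹^4 - q^2*p⁻¹*q⁻¹^4*z⁻¹ + q^2*z*p⁻¹*q⁻¹^2 + p*z*z⁻¹ + p*q^2 - p*q^2*z⁻¹ - p*q^2*q⁻¹^2 + p*q^2*q⁻¹^2*τ + p*q^2*q⁻¹^2*z⁻¹ - p*q^2*q⁻¹^2*z⁻¹*τ) * hP + (-p⁻¹*τ - p⁻¹*z⁻¹ + p⁻¹*z⁻¹*τ + p⁻¹*q⁻¹^2 - p⁻¹*q⁻¹^2*z⁻¹ + z*p⁻¹ - q*p⁻¹*q⁻¹*τ - q*p⁻¹*q⁻¹*z⁻¹ + q*p⁻¹*q⁻¹*z⁻¹*τ + q*p⁻¹*q⁻¹^3 - q*p⁻¹*q⁻¹^3*z⁻¹ + q*z*p⁻¹*q⁻¹ - p + p*τ + p*z⁻¹ - p*z⁻¹*τ - p*q*q⁻¹ + p*q*q⁻¹*τ + p*q*q⁻¹*z⁻¹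 - p*q*q⁻¹*z⁻¹*τ) * hQ + (-z*p⁻¹ + q^2*p⁻¹ + p) * hZ
    have h2 : (D z)⁻¹ * ((z - 1) * p⁻¹ * a⁻¹ + (z⁻¹ - 1)) * a
        + (D z)⁻¹ * ((z⁻¹ - 1) * ε) * τ
        + (D z)⁻¹ * (-(ε * (1 - p⁻¹ * a⁻¹)) - (z⁻¹ - 1) * ε)
        = 1 + ((D z)⁻¹ * ((z⁻¹ - 1) * p * q ^ 2))
            * (a * a - (1 + ε * a - ε * a * τ)) := by
      calc (D z)⁻¹ * ((z - 1) * p⁻¹ * a⁻¹ + (z⁻¹ - 1)) * a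
            + (D z)⁻¹ * ((z⁻¹ - 1) * ε) * τ
            + (D z)⁻¹ * (-(ε * (1 - p⁻¹ * a⁻¹)) - (z⁻¹ - 1) * ε)
          = (D z)⁻¹ * (((z - 1) * p⁻¹ * a⁻¹ + (z⁻¹ - 1)) * a
              + (z⁻¹ - 1) * ε * τ
              + (-(ε * (1 - p⁻¹ * a⁻¹)) - (z⁻¹ - 1) * ε)) := by ring
        _ = (D z)⁻¹ * (D z + ((z⁻¹ - 1) * p * q ^ 2)
              * (a * a - (1 + ε * a - ε * a * τ))) := by rw [h1]
        _ = 1 + ((D z)⁻¹ * ((z⁻¹ - 1) * p * q ^ 2))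
              * (a * a - (1 + ε * a - ε * a * τ)) := by
            rw [mul_add, inv_mul_cancel₀ hDz]; ring
    rw [h2, add_smul, one_smul, mul_smul, hM, smul_zero, add_zero]
  · -- unitarity
    rw [hYzi, hYz, keymul]
    have ct : (D z⁻¹)⁻¹ * ((z⁻¹ - 1) * p⁻¹ * a⁻¹ + (z - 1))
        * ((D z)⁻¹ * ((z - 1) * p⁻¹ * a⁻¹ + (z⁻¹ - 1))) * ε
        + (D z⁻¹)⁻¹ * ((z⁻¹ - 1) * p⁻¹ * a⁻¹ + (z - 1))
          * ((D z)⁻¹ * (-(ε * (1 - p⁻¹ * a⁻¹)) - (z⁻¹ - 1) * ε))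
        + (D z⁻¹)⁻¹ * (-(ε * (1 - p⁻¹ * a⁻¹)) - (z - 1) * ε)
          * ((D z)⁻¹ * ((z - 1) * p⁻¹ * a⁻¹ + (z⁻¹ - 1))) = 0 := by
      rw [hainv, hε]
      linear_combination (((D z⁻¹)⁻¹ * (D z)⁻¹) * (p*q^4*p⁻¹^2 - p*q^4*z*p⁻¹^2*z⁻¹ - p^2*q^4*p⁻¹ + p^2*q^4*z*p⁻¹*z⁻¹)) * hP + (((D z⁻¹)⁻¹ * (D z)⁻¹) * (0)) * hQ + (((D z⁻¹)⁻¹ * (D z)⁻¹) * (p⁻¹ - p - p*q^4*p⁻¹^2 + p^2*q^4*p⁻¹)) * hZ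
    have c1 : (D z⁻¹)⁻¹ * ((z⁻¹ - 1) * p⁻¹ * a⁻¹ + (z - 1))
        * ((D z)⁻¹ * ((z - 1) * p⁻¹ * a⁻¹ + (z⁻¹ - 1)))
        + (D z⁻¹)⁻¹ * (-(ε * (1 - p⁻¹ * a⁻¹)) - (z - 1) * ε)
          * ((D z)⁻¹ * (-(ε * (1 - p⁻¹ * a⁻¹)) - (z⁻¹ - 1) * ε)) = 1 := by
      have h0 : ((z⁻¹ - 1) * p⁻¹ * a⁻¹ + (z - 1))
          * ((z - 1) * p⁻¹ * a⁻¹ + (z⁻¹ - 1))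
          + (-(ε * (1 - p⁻¹ * a⁻¹)) - (z - 1) * ε)
            * (-(ε * (1 - p⁻¹ * a⁻¹)) - (z⁻¹ - 1) * ε) = D z⁻¹ * D z := by
        rw [hainv, hε]
        simp only [hD, inv_inv]
        linear_combination ((-2)*z*z⁻¹ + z*z⁻¹^2 + z^2*z⁻¹ + (2)*q^2 - q^2*p⁻¹^2*z⁻¹ + (-2)*q^2*z*z⁻¹ - q^2*z*p⁻¹^2 + q^4*p⁻¹^2 + p*z^2*p⁻¹*z⁻¹^3 + p*z^3*p⁻¹*z⁻¹^2 + (2)*p*q^2*p⁻¹*z⁻¹ + (2)*p*q^2*z*p⁻¹ - p*q^2*z*p⁻¹*z⁻¹^3 + (-2)*p*q^2*z^2*p⁻¹*z⁻¹^2 - p*q^2*z^3*p⁻¹*z⁻¹ - p*q^4*p⁻¹ - p*q^4*p⁻¹*z⁻¹ + p*q^4*p⁻¹^3 - p*q^4*z*p⁻¹ + p*q^4*z*p⁻¹*z⁻¹ + p*q^4*z*p⁻¹*z⁻¹^2 + p*q^4*z^2*p⁻¹*z⁻¹ - p^2*z*z⁻¹ + (-2)*p^2*q^4*p⁻¹^2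 - p^3*z^2*p⁻¹*z⁻¹^2 + p^3*q^2*z*p⁻¹*z⁻¹^2 + p^3*q^2*z^2*p⁻¹*z⁻¹ + p^3*q^4*p⁻¹ - p^3*q^4*z*p⁻¹*z⁻¹) * hP + (0) * hQ + ((-1) + z⁻¹ + z - z*p⁻¹^2*z⁻¹ - z^2*p⁻¹^2*z⁻¹^2 + (-2)*q^2 + q^2*p⁻¹^2*z⁻¹ + q^2*z*p⁻¹^2 + q^2*z*p⁻¹^2*z⁻¹^2 + q^2*z^2*p⁻¹^2*z⁻¹ - q^4*p⁻¹^2 - q^4*z*p⁻¹^2*z⁻¹ + p*z*p⁻¹*z⁻¹^2 + p*z^2*p⁻¹*z⁻¹ - p*q^2*p⁻¹*z⁻¹^2 + (-2)*p*q^2*z*p⁻¹*z⁻¹ - p*q^2*z^2*p⁻¹ + p*q^4*p⁻¹ + p*q^4*p⁻¹*z⁻¹ + p*q^4*z*p⁻¹ - p^3*z*p⁻¹*z⁻¹ + p^3*q^2*p⁻¹*z⁻¹ + p^3*q^2*z*p⁻¹ - p^3*q^4*p⁻¹) * hZ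
      calc _ = (D z⁻¹)⁻¹ * (D z)⁻¹
            * (((z⁻¹ - 1) * p⁻¹ * a⁻¹ + (z - 1))
                * ((z - 1) * p⁻¹ * a⁻¹ + (z⁻¹ - 1))
              + (-(ε * (1 - p⁻¹ * a⁻¹)) - (z - 1) * ε)
                * (-(ε * (1 - p⁻¹ * a⁻¹)) - (z⁻¹ - 1) * ε)) := by ring
        _ = (D z⁻¹)⁻¹ * (D z)⁻¹ * (D z⁻¹ * D z) := by rw [h0]
        _ = ((D z⁻¹)⁻¹ * D z⁻¹) * ((D z)⁻¹ * D z) := by ring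
        _ = 1 := by rw [inv_mul_cancel₀ hDzinv, inv_mul_cancel₀ hDz, mul_one]
    have ce : (D z⁻¹)⁻¹ * ((z⁻¹ - 1) * p⁻¹ * a⁻¹ + (z - 1))
        * ((D z)⁻¹ * ((z⁻¹ - 1) * ε)) * a
        + (D z⁻¹)⁻¹ * ((z - 1) * ε)
          * ((D z)⁻¹ * ((z - 1) * p⁻¹ * a⁻¹ + (z⁻¹ - 1))) * a
        + (D z⁻¹)⁻¹ * ((z - 1) * ε) * ((D z)⁻¹ * ((z⁻¹ - 1) * ε)) * τ
        + (D z⁻¹)⁻¹ * ((z - 1) * ε)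
          * ((D z)⁻¹ * (-(ε * (1 - p⁻¹ * a⁻¹)) - (z⁻¹ - 1) * ε))
        + (D z⁻¹)⁻¹ * (-(ε * (1 - p⁻¹ * a⁻¹)) - (z - 1) * ε)
          * ((D z)⁻¹ * ((z⁻¹ - 1) * ε))
        - (D z⁻¹)⁻¹ * ((z⁻¹ - 1) * p⁻¹ * a⁻¹ + (z - 1))
          * ((D z)⁻¹ * ((z - 1) * p⁻¹ * a⁻¹ + (z⁻¹ - 1))) * (ε * a)
        = ((D z⁻¹)⁻¹ * (D z)⁻¹ * (-(z - 1) ^ 2 * ε * p * q ^ 2 * z⁻¹))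
          * (a * a - (1 + ε * a - ε * a * τ)) := by
      rw [hainv, ha, hε]
      linear_combination (((D z⁻¹)⁻¹ * (D z)⁻¹) * ((-2)*τ + (-2)*z⁻¹ + (2)*z⁻¹*τ + q⁻¹^2 - q⁻¹^2*z⁻¹ + (-2)*z + (2)*z*τ + (4)*z*z⁻¹ + (-2)*z*z⁻¹*τ - z*q⁻¹^2 + z*q⁻¹^2*z⁻¹ + (-4)*q*q⁻¹ + (4)*q*q⁻¹*τ + (2)*q*q⁻¹*z⁻¹ + (-2)*q*q⁻¹*z⁻¹*τ + (-2)*q*q⁻¹^3 + q*q⁻¹^3*z⁻¹ + (2)*q*z*q⁻¹ + (-2)*q*z*q⁻¹*τ + q*z*q⁻¹^3 + (2)*q^2 + (-2)*q^2*p⁻¹^2 + q^2*p⁻¹^2*z⁻¹ - q^2*p⁻¹^2*q⁻¹^2*z⁻¹ + q^2*p⁻¹^2*q⁻¹^2*z⁻¹*τ - q^2*p⁻¹^2*q⁻¹^4*z⁻¹ - q^2*z + (-2)*q^2*z*z⁻¹ + q^2*z*p⁻¹^2 + (2)*q^2*z*p⁻¹^2*q⁻¹^2*z⁻¹ + (-2)*q^2*z*p⁻¹^2*q⁻¹^2*z⁻¹*τ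 + (2)*q^2*z*p⁻¹^2*q⁻¹^4*z⁻¹ + q^2*z^2*z⁻¹ - q^2*z^2*p⁻¹^2*q⁻¹^2*z⁻¹ + q^2*z^2*p⁻¹^2*q⁻¹^2*z⁻¹*τ - q^2*z^2*p⁻¹^2*q⁻¹^4*z⁻¹ + (2)*q^3*p⁻¹^2*q⁻¹ - q^3*p⁻¹^2*q⁻¹*z⁻¹ - q^3*z*p⁻¹^2*q⁻¹ + (4)*p*q^2*p⁻¹ + (-2)*p*q^2*p⁻¹*z⁻¹ + (2)*p*q^2*p⁻¹*q⁻¹^2*z⁻¹ + (-2)*p*q^2*p⁻¹*q⁻¹^2*z⁻¹*τ + p*q^2*p⁻¹*q⁻¹^4*z⁻¹ + (-2)*p*q^2*z*p⁻¹ + (-4)*p*q^2*z*p⁻¹*q⁻¹^2*z⁻¹ + (4)*p*q^2*z*p⁻¹*q⁻¹^2*z⁻¹*τ + (-2)*p*q^2*z*p⁻¹*q⁻¹^4*z⁻¹ + (2)*p*q^2*z^2*p⁻¹*q⁻¹^2*z⁻¹ + (-2)*p*q^2*z^2*p⁻¹*q⁻¹^2*z⁻¹*τ + p*q^2*z^2*p⁻¹*q⁻¹^4*z⁻¹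 + (-2)*p*q^3*p⁻¹*q⁻¹ + p*q^3*p⁻¹*q⁻¹*z⁻¹ + p*q^3*z*p⁻¹*q⁻¹ + p*q^4*p⁻¹^3*q⁻¹^2 - p*q^4*p⁻¹^3*q⁻¹^2*z⁻¹ - p*q^4*z*p⁻¹^3*q⁻¹^2 + p*q^4*z*p⁻¹^3*q⁻¹^2*z⁻¹ + (-2)*p^2*q^2 + p^2*q^2*z⁻¹ - p^2*q^2*q⁻¹^2*z⁻¹ + p^2*q^2*q⁻¹^2*z⁻¹*τ + p^2*q^2*z + (2)*p^2*q^2*z*q⁻¹^2*z⁻¹ + (-2)*p^2*q^2*z*q⁻¹^2*z⁻¹*τ - p^2*q^2*z^2*q⁻¹^2*z⁻¹ + p^2*q^2*z^2*q⁻¹^2*z⁻¹*τ - p^2*q^4*p⁻¹^2*q⁻¹^2 + p^2*q^4*p⁻¹^2*q⁻¹^2*z⁻¹ + p^2*q^4*z*p⁻¹^2*q⁻¹^2 - p^2*q^4*z*p⁻¹^2*q⁻¹^2*z⁻¹)) * hP + (((D z⁻¹)⁻¹ * (D z)⁻¹) * ((-4) + (4)*τ + (2)*z⁻¹ + (-2)*z⁻¹*τ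 + (-2)*q⁻¹^2 + q⁻¹^2*z⁻¹ + (2)*p⁻¹^2 + (-2)*p⁻¹^2*τ - p⁻¹^2*z⁻¹ + p⁻¹^2*z⁻¹*τ + (2)*p⁻¹^2*q⁻¹^2 - p⁻¹^2*q⁻¹^2*z⁻¹ + (2)*z + (-2)*z*τ + z*q⁻¹^2 - z*p⁻¹^2 + z*p⁻¹^2*τ - z*p⁻¹^2*q⁻¹^2 - q*p⁻¹^2*q⁻¹*z⁻¹ + q*p⁻¹^2*q⁻¹*z⁻¹*τ - q*p⁻¹^2*q⁻¹^3*z⁻¹ + (2)*q*z*p⁻¹^2*q⁻¹*z⁻¹ + (-2)*q*z*p⁻¹^2*q⁻¹*z⁻¹*τ + (2)*q*z*p⁻¹^2*q⁻¹^3*z⁻¹ - q*z^2*p⁻¹^2*q⁻¹*z⁻¹ + q*z^2*p⁻¹^2*q⁻¹*z⁻¹*τ - q*z^2*p⁻¹^2*q⁻¹^3*z⁻¹ + (2)*q^2*p⁻¹^2 - q^2*p⁻¹^2*z⁻¹ - q^2*z*p⁻¹^2 + (2)*p*q*p⁻¹*q⁻¹*z⁻¹ + (-2)*p*q*p⁻¹*q⁻¹*z⁻¹*τ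 + p*q*p⁻¹*q⁻¹^3*z⁻¹ + (-4)*p*q*z*p⁻¹*q⁻¹*z⁻¹ + (4)*p*q*z*p⁻¹*q⁻¹*z⁻¹*τ + (-2)*p*q*z*p⁻¹*q⁻¹^3*z⁻¹ + (2)*p*q*z^2*p⁻¹*q⁻¹*z⁻¹ + (-2)*p*q*z^2*p⁻¹*q⁻¹*z⁻¹*τ + p*q*z^2*p⁻¹*q⁻¹^3*z⁻¹ + (-2)*p*q^2*p⁻¹ + p*q^2*p⁻¹*z⁻¹ + p*q^2*z*p⁻¹ + p*q^3*p⁻¹^3*q⁻¹ - p*q^3*p⁻¹^3*q⁻¹*z⁻¹ - p*q^3*z*p⁻¹^3*q⁻¹ + p*q^3*z*p⁻¹^3*q⁻¹*z⁻¹ + (2)*p^2 + (-2)*p^2*τ - p^2*z⁻¹ + p^2*z⁻¹*τ - p^2*z + p^2*z*τ - p^2*q*q⁻¹*z⁻¹ + p^2*q*q⁻¹*z⁻¹*τ + (2)*p^2*q*z*q⁻¹*z⁻¹ + (-2)*p^2*q*z*q⁻¹*z⁻¹*τ - p^2*q*z^2*q⁻¹*z⁻¹ + p^2*q*z^2*q⁻¹*z⁻¹*τ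 - p^2*q^3*p⁻¹^2*q⁻¹ + p^2*q^3*p⁻¹^2*q⁻¹*z⁻¹ + p^2*q^3*z*p⁻¹^2*q⁻¹ - p^2*q^3*z*p⁻¹^2*q⁻¹*z⁻¹)) * hQ + (((D z⁻¹)⁻¹ * (D z)⁻¹) * ((4) + (-2)*τ + q⁻¹^2 + (-2)*p⁻¹^2 + p⁻¹^2*τ - p⁻¹^2*q⁻¹^2 + (2)*q*p⁻¹^2*q⁻¹ + (-2)*q*p⁻¹^2*q⁻¹*τ + (2)*q*p⁻¹^2*q⁻¹^3 - q*z*p⁻¹^2*q⁻¹ + q*z*p⁻¹^2*q⁻¹*τ - q*z*p⁻¹^2*q⁻¹^3 + (-2)*q^2 + q^2*z + (-4)*p*q*p⁻¹*q⁻¹ + (4)*p*q*p⁻¹*q⁻¹*τ + (-2)*p*q*p⁻¹*q⁻¹^3 + (2)*p*q*z*p⁻¹*q⁻¹ + (-2)*p*q*z*p⁻¹*q⁻¹*τ + p*q*z*p⁻¹*q⁻¹^3 + p*q^3*p⁻¹^3*q⁻¹ + (-2)*p^2 + p^2*τ + (2)*p^2*q*q⁻¹ + (-2)*p^2*q*q⁻¹*τ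 - p^2*q*z*q⁻¹ + p^2*q*z*q⁻¹*τ + (2)*p^2*q^2 - p^2*q^2*z - p^2*q^3*p⁻¹^2*q⁻¹)) * hZ
    rw [ct, c1, ce, mul_smul, hM, smul_zero]
    simp
end

section
/- The operators ē_1 = (1/c) b_{12} ((u_2 - u_1 + c)/(u_2 - u_1))(1 + k_{12}) and τ - ē_1 = (1/c)(1 - k_{12})((u_1 - u_2 + c)/(u_1 - u_2)) b_{12}, where b_{12} = u_1 - u_2 + b and τ = 2(1 + b/c), are well-defined on polynomials (map polynomials to polynomials) and satisfy ē_1^2 = τ ē_1. -/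
/-!
Let `s` swap the two variables and `d = u₂ - u₁`, so `s d = -d`. Every `Q - s Q` vanishes on
`u₁ = u₂`, hence is divisible by `d`, which is why `ē₁` preserves polynomials. Its image is
`s`-symmetric, since `d` and `Q - s Q` are both `s`-antisymmetric. For symmetric `E`,
`N E - s (N E) = E ((d + c)(d + b) - (c - d)(b - d)) = 2 (b + c) d E`, which is `ē₁² = τ ē₁`.
-/

open MvPolynomial

namespace MvPolynomial

variable {σ R : Type*}

theorem X_sub_X_ne_zero [CommRing R] [Nontrivial R] {i j : σ} (hij : i ≠ j) :
    (X i - X j : MvPolynomial σ R) ≠ 0 :=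
  sub_ne_zero.mpr (X_injective.ne hij)

variable [DecidableEq σ]

theorem rename_swap_rename_swap [CommSemiring R] (i j : σ) (p : MvPolynomial σ R) :
    rename (Equiv.swap i j) (rename (Equiv.swap i j) p) = p := by
  rw [rename_rename, ← Equiv.coe_trans, Equiv.swap_swap, Equiv.coe_refl, rename_id_apply]

theorem X_sub_X_dvd_sub_rename_swap [CommRing R] (i j : σ) (p : MvPolynomial σ R) :
    X i - X j ∣ p - rename (Equiv.swap i j) p := by
  induction p using MvPolynomial.induction_on with
  | C r => simp
  | add p q hp hq => simpa only [map_add, add_sub_add_comm] using dvd_add hp hq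
  | mul_X p k hp =>
    have hk : X i - X j ∣ (X k - X (Equiv.swap i j k) : MvPolynomial σ R) := by
      rw [Equiv.swap_apply_def]
      split_ifs with hki hkj
      · rw [hki]
      · rw [hkj]
        exact ⟨-1, by ring⟩
      · simp
    have hsplit : p * X k - rename (Equiv.swap i j) (p * X k) =
        (p - rename (Equiv.swap i j) p) * X k +
          rename (Equiv.swap i j) p * (X k - X (Equiv.swap i j k)) := by
      rw [map_mul, rename_X]
      ring
    rw [hsplit]
    exact dvd_add (dvd_mul_of_dvd_left hp _) (dvd_mul_of_dvd_right hk _)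

theorem rename_swap_eq_self_of_mul_eq_sub [CommRing R] [IsDomain R] {i j : σ} (hij : i ≠ j)
    {p q : MvPolynomial σ R} (h : (X i - X j) * p = q - rename (Equiv.swap i j) q) :
    rename (Equiv.swap i j) p = p := by
  have hswap := congrArg (rename (Equiv.swap i j)) h
  simp only [map_mul, map_sub, rename_X, Equiv.swap_apply_left, Equiv.swap_apply_right,
    rename_swap_rename_swap] at hswap
  exact mul_left_cancel₀ (X_sub_X_ne_zero hij) (by linear_combination -hswap - h)

theorem sub_rename_swap_of_rename_swap_eq_self [CommRing R] {i j : σ} {p : MvPolynomial σ R}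
    (hp : rename (Equiv.swap i j) p = p) (b c : R) :
    p * (X i - X j + C c) * (X i - X j + C b) -
        rename (Equiv.swap i j) (p * (X i - X j + C c) * (X i - X j + C b)) =
      (X i - X j) * (C (2 * (b + c)) * p) := by
  simp only [map_mul, map_add, map_sub, rename_X, rename_C, Equiv.swap_apply_left,
    Equiv.swap_apply_right, hp, map_ofNat]
  ring

end MvPolynomial

/-- `E` encodes `P ē₁` through `c (u₂ - u₁) (P ē₁) = N P - k₁₂ (N P)`, and the second
conjunct says that the image of `E` under `ē₁` is `τ E` with `τ = 2 (1 + b / c)`. -/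
theorem brauer_e1_projector_general {F : Type*} [Field F]
    (b c : F) (hc : c ≠ 0)
    (k : MvPolynomial (Fin 2) F → MvPolynomial (Fin 2) F)
    (hk : ∀ P, k P = rename (Equiv.swap (0 : Fin 2) 1) P)
    (N : MvPolynomial (Fin 2) F → MvPolynomial (Fin 2) F)
    (hN : ∀ P, N P = P * (X 1 - X 0 + C c) * (X 1 - X 0 + C b))
    (P : MvPolynomial (Fin 2) F) :
    ∃ E : MvPolynomial (Fin 2) F,
      (X 1 - X 0) * (C c * E) = N P - k (N P) ∧
      (∀ E₂ : MvPolynomial (Fin 2) F,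
        (X 1 - X 0) * (C c * E₂) = N E - k (N E) →
        E₂ = C (2 * (1 + b / c)) * E) := by
  have hk' : ∀ Q, k Q = rename (Equiv.swap (1 : Fin 2) 0) Q := fun Q => by
    rw [hk, Equiv.swap_comm]
  have hCc : (C c * C c⁻¹ : MvPolynomial (Fin 2) F) = 1 := by
    rw [← C_mul, mul_inv_cancel₀ hc, C_1]
  obtain ⟨D, hD⟩ := X_sub_X_dvd_sub_rename_swap (R := F) 1 0 (N P)
  refine ⟨C c⁻¹ * D, by rw [hk', hD, ← mul_assoc (C c), hCc, one_mul], fun E₂ h₂ => ?_⟩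
  have hD_symm := rename_swap_eq_self_of_mul_eq_sub (by decide) hD.symm
  have hE_symm : rename (Equiv.swap (1 : Fin 2) 0) (C c⁻¹ * D) = C c⁻¹ * D := by
    rw [map_mul, rename_C, hD_symm]
  rw [hk', hN, sub_rename_swap_of_rename_swap_eq_self hE_symm] at h₂
  have hcE₂ := mul_left_cancel₀ (X_sub_X_ne_zero (by decide)) h₂
  calc E₂ = C c⁻¹ * (C c * E₂) := by rw [← mul_assoc, mul_comm (C c⁻¹), hCc, one_mul]
    _ = C (2 * (1 + b / c)) * (C c⁻¹ * D) := by
      simp only [hcE₂, ← mul_assoc, ← C_mul]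
      congr 2
      field_simp
      ring

/-- The Brauer projector `ē₁ = (1/c) b₁₂ ((u₂-u₁+c)/(u₂-u₁))(1+k₁₂)` is well defined
on polynomials (the symmetrized expression is again a polynomial, the apparent pole at
`u₁ = u₂` cancelling) and satisfies `ē₁² = τ ē₁` with `τ = 2(1 + b/c)`.
Here `c·(u₂-u₁)·(P ē₁) = N(P) - k₁₂ N(P)` with `N(P) = P·(u₂-u₁+c)·(u₂-u₁+b)`,
and `k₁₂` swaps the two variables. -/
theorem brauer_e1_projector {F : Type*} [Field F] [CharZero F]
    (b c : F) (hb : b ≠ 0) (hc : c ≠ 0)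
    (k : MvPolynomial (Fin 2) F → MvPolynomial (Fin 2) F)
    (hk : ∀ P, k P = rename (Equiv.swap (0 : Fin 2) 1) P)
    (N : MvPolynomial (Fin 2) F → MvPolynomial (Fin 2) F)
    (hN : ∀ P, N P = P * (X 1 - X 0 + C c) * (X 1 - X 0 + C b))
    (P : MvPolynomial (Fin 2) F) :
    ∃ E : MvPolynomial (Fin 2) F,
      (X 1 - X 0) * (C c * E) = N P - k (N P) ∧
      (∀ E₂ : MvPolynomial (Fin 2) F,
        (X 1 - X 0) * (C c * E₂) = N E - k (N E) →
        E₂ = C (2 * (1 + b / c)) * E) :=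
  brauer_e1_projector_general b c hc k hk N hN P
end

section
/- The polynomial ρ̄ = ∏_{i=1}^{n} ∏_{k=1}^{n/2 - 1} (q z_i - q^{-1} z_{i+k}) (indices mod n with identification z_{i+n} = a^{-2} z_i, a = p^{-1}q^{-2}) is homogeneous of degree n(n/2 - 1) in z_1, ..., z_n and vanishes whenever (z_i, z_j, z_k) = (z, q^2 z, q^4 z) for cyclically ordered i, j, k. -/
open MvPolynomial


lemma arith_aux {n : ℕ} {A B : ℕ} (hA : 1 ≤ A) (hAB : A ≤ B) :
    (A - 1) % n + (B - A) = n * ((B - 1) / n - (A - 1) / n) + (B - 1) % n := by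
  have hA1 := Nat.div_add_mod (A - 1) n
  have hB1 := Nat.div_add_mod (B - 1) n
  have hq : (A - 1) / n ≤ (B - 1) / n := Nat.div_le_div_right (by omega)
  have hmul : n * ((A - 1) / n) ≤ n * ((B - 1) / n) := Nat.mul_le_mul_left n hq
  rw [Nat.mul_sub]
  omega


/-- The maximally crossed polynomial `ρ̄ = ∏_{i=1}^n ∏_{k=1}^{n/2-1} (q z_i - q⁻¹ z_{i+k})`,
with the cyclic identification `z_{i+n} = a⁻² z_i` (`a = p⁻¹q⁻²`), is homogeneous of
degree `n(n/2 - 1)` and vanishes whenever `(z_i, z_j, z_k) = (z, q²z, q⁴z)` for a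
cyclically ordered triple of indices (i.e. `i < j < k < i + n` in the extended indexing). -/
theorem rho_bar_homogeneous_and_wheel_vanishing {F : Type*} [Field F]
    (p q : F) (hp : p ≠ 0) (hq : q ≠ 0)
    (n : ℕ) (hn : 0 < n) (heven : Even n) :
    let a : F := p⁻¹ * q⁻¹ ^ 2
    -- extended variables: `Z j` is `z_j` for `1 ≤ j ≤ n`, and `z_{j+n} = a⁻² z_j`
    let Z : ℕ → MvPolynomial (Fin n) F :=
      fun j => C ((a⁻¹ ^ 2) ^ ((j - 1) / n)) * X ⟨(j - 1) % n, Nat.mod_lt _ hn⟩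
    let ρ : MvPolynomial (Fin n) F :=
      ∏ i ∈ Finset.range n, ∏ k ∈ Finset.Icc 1 (n / 2 - 1),
        (C q * Z (i + 1) - C q⁻¹ * Z (i + 1 + k))
    ρ.IsHomogeneous (n * (n / 2 - 1)) ∧
    ∀ i j k : ℕ, 1 ≤ i → i < j → j < k → k < i + n →
      ∀ (z : F) (v : Fin n → F),
        eval v (Z i) = z → eval v (Z j) = q ^ 2 * z → eval v (Z k) = q ^ 4 * z →
        eval v ρ = 0 := by
  intro a Z ρ
  have hc : (a⁻¹ ^ 2 : F) ≠ 0 := by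
    have ha : a ≠ 0 := mul_ne_zero (inv_ne_zero hp) (pow_ne_zero _ (inv_ne_zero hq))
    exact pow_ne_zero _ (inv_ne_zero ha)
  constructor
  · have hZ : ∀ m, (Z m).IsHomogeneous 1 := fun m => by
      simpa using (isHomogeneous_C _ ((a⁻¹ ^ 2) ^ ((m - 1) / n))).mul
        (isHomogeneous_X F (⟨(m - 1) % n, Nat.mod_lt _ hn⟩ : Fin n))
    have hfac : ∀ m m', (C q * Z m - C q⁻¹ * Z m').IsHomogeneous 1 := by
      intro m m'
      apply IsHomogeneous.sub
      · simpa using (isHomogeneous_C (Fin n) q).mul (hZ m)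
      · simpa using (isHomogeneous_C (Fin n) q⁻¹).mul (hZ m')
    have h1 : ∀ i ∈ Finset.range n,
        (∏ k ∈ Finset.Icc 1 (n / 2 - 1),
          (C q * Z (i + 1) - C q⁻¹ * Z (i + 1 + k))).IsHomogeneous (n / 2 - 1) := by
      intro i _
      have := IsHomogeneous.prod (Finset.Icc 1 (n / 2 - 1))
        (fun k => C q * Z (i + 1) - C q⁻¹ * Z (i + 1 + k)) (fun _ => 1)
        (fun k _ => hfac _ _)
      simpa [Nat.card_Icc] using this
    have h2 := IsHomogeneous.prod (Finset.range n) _ (fun _ => n / 2 - 1) h1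
    simpa [Finset.sum_const, smul_eq_mul, Finset.card_range, mul_comm] using h2
  · intro i j k hi hij hjk hki z v hvi hvj hvk
    obtain ⟨m, hm⟩ := heven
    have hE : ∀ M : ℕ, eval v (Z M)
        = (a⁻¹ ^ 2) ^ ((M - 1) / n) * v ⟨(M - 1) % n, Nat.mod_lt _ hn⟩ := by
      intro M; simp [Z]
    suffices H : ∀ A B : ℕ, 1 ≤ A → A < B → B - A ≤ n / 2 - 1 →
        eval v (Z B) = q ^ 2 * eval v (Z A) → eval v ρ = 0 by
      by_cases hd : j - i ≤ n / 2 - 1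
      · exact H i j hi hij hd (by rw [hvj, hvi])
      · exact H j k (by omega) hjk (by omega)
          (by rw [hvk, hvj]; ring)
    intro A B hA hAB hBA hrel
    set c : F := a⁻¹ ^ 2 with hcdef
    set qA := (A - 1) / n with hqA
    set qB := (B - 1) / n with hqB
    set rA := (A - 1) % n with hrA
    set rB := (B - 1) % n with hrB
    have hrAn : rA < n := Nat.mod_lt _ hn
    have hrBn : rB < n := Nat.mod_lt _ hn
    have hkey : rA + (B - A) = n * (qB - qA) + rB := arith_aux hA (le_of_lt hAB)
    have hdiv : (rA + (B - A)) / n = qB - qA := by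
      rw [hkey, Nat.mul_add_div hn, Nat.div_eq_of_lt hrBn, Nat.add_zero]
    have hmod : (rA + (B - A)) % n = rB := by
      rw [hkey, Nat.mul_add_mod]
      exact Nat.mod_eq_of_lt hrBn
    have hqle : qA ≤ qB := Nat.div_le_div_right (by omega)
    have hmem0 : rA ∈ Finset.range n := Finset.mem_range.2 hrAn
    have hmemt : B - A ∈ Finset.Icc 1 (n / 2 - 1) := Finset.mem_Icc.2 ⟨by omega, hBA⟩
    have hx : eval v (Z (rA + 1)) = v ⟨rA, Nat.mod_lt _ hn⟩ := by
      rw [hE]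
      simp [Nat.div_eq_of_lt hrAn, Nat.mod_eq_of_lt hrAn]
    have hy : eval v (Z (rA + 1 + (B - A)))
        = c ^ (qB - qA) * v ⟨rB, Nat.mod_lt _ hn⟩ := by
      rw [hE]
      have h1 : rA + 1 + (B - A) - 1 = rA + (B - A) := by omega
      rw [h1, hdiv]
      congr 1
      exact congrArg v (Fin.ext hmod)
    have hxv : eval v (Z A) = c ^ qA * v ⟨rA, Nat.mod_lt _ hn⟩ := hE A
    have hyv : eval v (Z B) = c ^ qB * v ⟨rB, Nat.mod_lt _ hn⟩ := hE B
    have hcancel : c ^ (qB - qA) * v ⟨rB, Nat.mod_lt _ hn⟩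
        = q ^ 2 * v ⟨rA, Nat.mod_lt _ hn⟩ := by
      have hpow : c ^ qB = c ^ qA * c ^ (qB - qA) := by
        rw [← pow_add]; congr 1; omega
      have hthis := hrel
      rw [hyv, hxv, hpow] at hthis
      have hca : (c : F) ^ qA ≠ 0 := pow_ne_zero _ hc
      apply mul_left_cancel₀ hca
      linear_combination hthis
    have hfac0 : eval v (C q * Z (rA + 1) - C q⁻¹ * Z (rA + 1 + (B - A))) = 0 := by
      have hsplit : eval v (C q * Z (rA + 1) - C q⁻¹ * Z (rA + 1 + (B - A)))
          = q * eval v (Z (rA + 1)) - q⁻¹ * eval v (Z (rA + 1 + (B - A))) := by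
        simp
      rw [hsplit, hx, hy, hcancel]
      field_simp
      ring
    show eval v ρ = 0
    rw [show ρ = ∏ i ∈ Finset.range n, ∏ k ∈ Finset.Icc 1 (n / 2 - 1),
        (C q * Z (i + 1) - C q⁻¹ * Z (i + 1 + k)) from rfl, map_prod]
    refine Finset.prod_eq_zero hmem0 ?_
    rw [map_prod]
    exact Finset.prod_eq_zero hmemt hfac0
end
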